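/- For any bilinear form h on an n-dimensional real inner product space (V,g) and any 0 ≤ k ≤ n−1, the Girard–Newton identity c t_k(h) = (n−k)·s_k(h) holds, where c t_k(h) is the trace of the k-th cofactor transformation t_k(h). -/

import Mathlib

noncomputable section

open Finset

/-- Double forms over an `n`-dimensional real inner product space, described by their
coefficients in a fixed orthonormal basis: a `(p,q)`-double form corresponds to a function
supported on pairs of subsets of cardinalities `p` and `q`. -/
abbrev DForm (n : ℕ) := Finset (Fin n) → Finset (Fin n) → ℝ

namespace DForm

variable {n : ℕ}

/-- Sign of the shuffle placing the elements of `A` (in increasing order) before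
those of `B` (in increasing order). -/
def shuffleSign (A B : Finset (Fin n)) : ℝ :=
  (-1 : ℝ) ^ (∑ x ∈ B, (A.filter fun a => x < a).card)

/-- The exterior product of double forms. -/
def wedge (ω₁ ω₂ : DForm n) : DForm n := fun I J =>
  ∑ A ∈ I.powerset, ∑ B ∈ J.powerset,
    shuffleSign A (I \ A) * shuffleSign B (J \ B) * ω₁ A B * ω₂ (I \ A) (J \ B)

/-- Exterior powers `ω^k` of a double form. -/
def dpow (ω : DForm n) : ℕ → DForm n
  | 0 => fun I J => if I = ∅ ∧ J = ∅ then 1 else 0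
  | k + 1 => wedge ω (dpow ω k)

/-- The double Hodge star operator. -/
def hstar (ω : DForm n) : DForm n := fun I J =>
  shuffleSign Iᶜ I * shuffleSign Jᶜ J * ω Iᶜ Jᶜ

/-- The contraction `c` of double forms. -/
def contr (ω : DForm n) : DForm n := fun I J =>
  ∑ j : Fin n,
    if j ∈ I ∨ j ∈ J then 0
    else shuffleSign {j} I * shuffleSign {j} J * ω (insert j I) (insert j J)

/-- Iterated contraction `c^k`. -/
def citer (ω : DForm n) : ℕ → DForm n
  | 0 => ω
  | k + 1 => contr (citer ω k)

/-- The inner product of double forms. -/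
def dinner (ω₁ ω₂ : DForm n) : ℝ :=
  ∑ I : Finset (Fin n), ∑ J : Finset (Fin n), ω₁ I J * ω₂ I J

/-- The transpose `ω^t` of a double form. -/
def transp (ω : DForm n) : DForm n := fun I J => ω J I

/-- The composition (Greub) product `ω₁ ∘ ω₂` of double forms. -/
def comp (ω₁ ω₂ : DForm n) : DForm n := fun I J =>
  ∑ K : Finset (Fin n), ω₂ I K * ω₁ K J

/-- The scalar value of a `(0,0)`-double form. -/
def toScalar (ω : DForm n) : ℝ := ω ∅ ∅

/-- The metric, as a `(1,1)`-double form. -/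
def gMetric (n : ℕ) : DForm n := fun I J => if I = J ∧ I.card = 1 then 1 else 0

/-- Iterated composition power `ω^{∘r}` of a `(1,1)`-double form, with `ω^{∘0} = g`. -/
def cpow (ω : DForm n) : ℕ → DForm n
  | 0 => gMetric n
  | r + 1 => comp ω (cpow ω r)

/-- The `(1,1)`-double form associated to a bilinear form, given by its matrix in the
orthonormal basis. -/
def ofMatrix (h : Matrix (Fin n) (Fin n) ℝ) : DForm n := fun I J =>
  ∑ i : Fin n, ∑ j : Fin n, if I = {i} ∧ J = {j} then h i j else 0

/-- `ω` is a `(p,q)`-double form. -/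
def IsOfDeg (ω : DForm n) (p q : ℕ) : Prop :=
  ∀ I J : Finset (Fin n), ω I J ≠ 0 → I.card = p ∧ J.card = q

/-- `ω` is a symmetric double form. -/
def IsSym (ω : DForm n) : Prop := ∀ I J, ω I J = ω J I

/-- The sign relating `e_{v 0} ∧ ⋯ ∧ e_{v (p-1)}` to the corresponding increasing
basis `p`-vector (and `0` if the indices are not pairwise distinct). -/
def tupleSign {p : ℕ} (v : Fin p → Fin n) : ℝ :=
  if Function.Injective v then (((Equiv.Perm.sign (Tuple.sort v)) : ℤ) : ℝ) else 0

/-- Evaluation of a double form on wedges of basis vectors indexed by arbitrary tuples. -/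
def evalT (ω : DForm n) {p q : ℕ} (v : Fin p → Fin n) (w : Fin q → Fin n) : ℝ :=
  tupleSign v * tupleSign w * ω (Finset.image v Finset.univ) (Finset.image w Finset.univ)

/-- The first Bianchi identity for a `(2,2)`-double form:
`R(x∧y,z∧t) + R(y∧z,x∧t) + R(z∧x,y∧t) = 0`. -/
def Bianchi2 (R : DForm n) : Prop :=
  ∀ x y z t : Fin n,
    evalT R ![x, y] ![z, t] + evalT R ![y, z] ![x, t] + evalT R ![z, x] ![y, t] = 0

/-- The first Bianchi identity for a `(p,p)`-double form. -/
def FirstBianchi (ω : DForm n) (p : ℕ) : Prop :=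
  ∀ (x : Fin (p + 1) → Fin n) (y : Fin (p - 1) → Fin n),
    ∑ j : Fin (p + 1),
      (-1 : ℝ) ^ (j : ℕ) * evalT ω (x ∘ Fin.succAbove j) (Fin.cons (x j) y) = 0

/-- The characteristic coefficient `s_k(h)` of a bilinear form `h`, defined through the
characteristic polynomial: `det(h - λ g) = ∑ (-1)^(n-i) s_i(h) λ^(n-i)`. -/
def sInv (h : Matrix (Fin n) (Fin n) ℝ) (k : ℕ) : ℝ :=
  (-1 : ℝ) ^ k * (Matrix.charpoly h).coeff (n - k)

/-- The `k`-th cofactor (Newton) transformation `t_k(h) = (1/(k!(n-1-k)!)) *(g^{n-1-k} h^k)`. -/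
def tInv (h : Matrix (Fin n) (Fin n) ℝ) (k : ℕ) : DForm n :=
  ((k.factorial * (n - 1 - k).factorial : ℕ) : ℝ)⁻¹ •
    hstar (wedge (dpow (gMetric n) (n - 1 - k)) (dpow (ofMatrix h) k))

/-- The `(r,q)`-cofactor `s_{(r,q)}(h) = (1/(q!(n-q-r)!)) *(g^{n-q-r} h^q)`. -/
def sCof (h : Matrix (Fin n) (Fin n) ℝ) (r q : ℕ) : DForm n :=
  ((q.factorial * (n - q - r).factorial : ℕ) : ℝ)⁻¹ •
    hstar (wedge (dpow (gMetric n) (n - q - r)) (dpow (ofMatrix h) q))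

end DForm

/-! In an orthonormal basis, `h^q(e_I, e_J) = q! · det h_{IJ}`: the recursion `h^{q+1} = h · h^q`
reproduces the Laplace expansion of the minor along a row, the shuffle signs being the cofactor
signs. With `h = g` this gives `g^m(e_A, e_B) = m! δ_{AB}`, so
`(g^{n-1-k} h^k)(e_T, e_T) = (n-1-k)! k! ∑_{K ⊆ T, |K| = k} det h_K`, and the diagonal entry of
`t_k(h)` at `e_j` is the sum of the principal `k`-minors of `h` avoiding `j`. Summing over `j`
counts every principal `k`-minor `n - k` times, while their plain sum is `s_k(h)`. -/

namespace Finset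

section LinearOrder

variable {α : Type*} [LinearOrder α]

def rank (I : Finset α) (i : α) : ℕ := #{x ∈ I | x < i}

theorem rank_orderEmbOfFin {I : Finset α} {q : ℕ} (hI : #I = q) (a : Fin q) :
    I.rank (I.orderEmbOfFin hI a) = a := by
  have below_eq : {x ∈ I | x < I.orderEmbOfFin hI a} = ({b | b < a} : Finset (Fin q)).map
      (I.orderEmbOfFin hI).toEmbedding := by
    ext x
    simp only [mem_filter, mem_map, mem_univ, true_and]
    constructor
    · rintro ⟨hx, hxa⟩
      obtain ⟨b, rfl⟩ : x ∈ Set.range (I.orderEmbOfFin hI) := by simpa using hx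
      exact ⟨b, by simpa using hxa, rfl⟩
    · rintro ⟨b, hb, rfl⟩
      exact ⟨orderEmbOfFin_mem _ _ _, by simpa using hb⟩
  rw [rank, below_eq, card_map, ← Fin.card_Iio, filter_gt_eq_Iio]

theorem rank_erase_self (I : Finset α) (i : α) : (I.erase i).rank i = I.rank i := by
  rw [rank, rank, filter_erase, erase_eq_of_notMem (by simp)]

theorem orderEmbOfFin_erase {I : Finset α} {q : ℕ} (hI : #I = q + 1) (a : Fin (q + 1))
    (hI' : #(I.erase (I.orderEmbOfFin hI a)) = q) :
    ⇑((I.erase (I.orderEmbOfFin hI a)).orderEmbOfFin hI') = I.orderEmbOfFin hI ∘ a.succAbove :=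
  (orderEmbOfFin_unique hI' (fun b => mem_erase.2
    ⟨(I.orderEmbOfFin hI).injective.ne (Fin.succAbove_ne a b), orderEmbOfFin_mem _ _ _⟩)
    ((I.orderEmbOfFin hI).strictMono.comp (Fin.strictMono_succAbove a))).symm

end LinearOrder

variable {α M : Type*} [AddCommMonoid M]

theorem sum_powerset_eq_sum_singleton (I : Finset α) {F : Finset α → M}
    (hF : ∀ A, #A ≠ 1 → F A = 0) : ∑ A ∈ I.powerset, F A = ∑ i ∈ I, F {i} := by
  rw [← sum_subset (fun A hA => mem_powerset.2 (mem_powersetCard.1 hA).1)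
    fun A _ hA => hF A fun h => hA (mem_powersetCard.2 ⟨mem_powerset.1 ‹_›, h⟩),
    powersetCard_one, sum_map]
  rfl

variable [DecidableEq α]

theorem sum_powersetCard_sdiff {T : Finset α} {m k : ℕ} (hT : #T = m + k) (f : Finset α → M) :
    ∑ A ∈ T.powersetCard m, f (T \ A) = ∑ K ∈ T.powersetCard k, f K := by
  refine sum_nbij' (T \ ·) (T \ ·) (fun A hA => ?_) (fun K hK => ?_)
    (fun A hA => sdiff_sdiff_eq_self (mem_powersetCard.1 hA).1)
    (fun K hK => sdiff_sdiff_eq_self (mem_powersetCard.1 hK).1) fun _ _ => rfl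
  · rw [mem_powersetCard] at hA ⊢
    exact ⟨sdiff_subset, by rw [card_sdiff_of_subset hA.1, hT, hA.2]; omega⟩
  · rw [mem_powersetCard] at hK ⊢
    exact ⟨sdiff_subset, by rw [card_sdiff_of_subset hK.1, hT, hK.2]; omega⟩

theorem sum_sum_powersetCard_compl_singleton [Fintype α] (k : ℕ) (f : Finset α → M) :
    ∑ j, ∑ K ∈ ({j}ᶜ : Finset α).powersetCard k, f K
      = (Fintype.card α - k) • ∑ K ∈ univ.powersetCard k, f K := by
  have powersetCard_compl (j : α) :
      ({j}ᶜ : Finset α).powersetCard k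
        = {K ∈ (univ : Finset α).powersetCard k | j ∉ K} := by
    ext K
    simp [mem_powersetCard, subset_compl_singleton, and_comm]
  simp_rw [powersetCard_compl, sum_filter]
  rw [sum_comm, smul_sum]
  refine sum_congr rfl fun K hK => ?_
  rw [← sum_filter, sum_const, filter_notMem_eq_sdiff, card_sdiff_of_subset (subset_univ K),
    card_univ, mem_powersetCard_univ.1 hK]

end Finset

namespace Matrix

variable {α β R : Type*} [LinearOrder α] [LinearOrder β] [CommRing R]

def minor (M : Matrix α β R) (q : ℕ) (I : Finset α) (J : Finset β) : R :=
  if h : #I = q ∧ #J = q then (M.submatrix (I.orderEmbOfFin h.1) (J.orderEmbOfFin h.2)).det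
  else 0

theorem minor_of_card {M : Matrix α β R} {q : ℕ} {I : Finset α} {J : Finset β} (hI : #I = q)
    (hJ : #J = q) : M.minor q I J = (M.submatrix (I.orderEmbOfFin hI) (J.orderEmbOfFin hJ)).det :=
  dif_pos ⟨hI, hJ⟩

theorem minor_of_not_card {M : Matrix α β R} {q : ℕ} {I : Finset α} {J : Finset β}
    (h : ¬(#I = q ∧ #J = q)) : M.minor q I J = 0 :=
  dif_neg h

theorem minor_succ_eq_sum (M : Matrix α β R) {q : ℕ} {I : Finset α} {J : Finset β}
    (hI : #I = q + 1) (hJ : #J = q + 1) {i : α} (hi : i ∈ I) :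
    M.minor (q + 1) I J
      = ∑ j ∈ J, (-1) ^ (I.rank i + J.rank j) * M i j *
          M.minor q (I.erase i) (J.erase j) := by
  obtain ⟨r, rfl⟩ : i ∈ Set.range (I.orderEmbOfFin hI) := by simpa using hi
  have sum_J (f : β → R) : ∑ j ∈ J, f j = ∑ c, f (J.orderEmbOfFin hJ c) := by
    conv_lhs => rw [← map_orderEmbOfFin_univ J hJ]
    exact sum_map _ _ _
  rw [minor_of_card hI hJ, det_succ_row _ r, sum_J]
  refine sum_congr rfl fun c _ => ?_
  have hI' : #(I.erase (I.orderEmbOfFin hI r)) = q := by simp [card_erase_of_mem, hI]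
  have hJ' : #(J.erase (J.orderEmbOfFin hJ c)) = q := by simp [card_erase_of_mem, hJ]
  rw [rank_orderEmbOfFin, rank_orderEmbOfFin, minor_of_card hI' hJ', orderEmbOfFin_erase,
    orderEmbOfFin_erase, submatrix_apply, submatrix_submatrix]

theorem minor_one {q : ℕ} {I J : Finset α} :
    (1 : Matrix α α R).minor q I J = if I = J ∧ #I = q then 1 else 0 := by
  by_cases hc : #I = q ∧ #J = q
  · rw [minor_of_card hc.1 hc.2]
    by_cases hIJ : I = J
    · subst hIJ
      rw [if_pos ⟨rfl, hc.1⟩, submatrix_one _ (orderEmbOfFin _ _).injective, det_one]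
    · rw [if_neg fun h => hIJ h.1]
      obtain ⟨x, hxI, hxJ⟩ := not_subset.1 fun h => hIJ (eq_of_subset_of_card_le h (by omega))
      obtain ⟨r, rfl⟩ : x ∈ Set.range (I.orderEmbOfFin hc.1) := by simpa using hxI
      refine det_eq_zero_of_row_eq_zero r fun b => one_apply_ne fun h => hxJ ?_
      rw [h]
      exact orderEmbOfFin_mem _ _ _
  · rw [minor_of_not_card hc, if_neg]
    rintro ⟨rfl, h⟩
    exact hc ⟨h, h⟩

theorem minor_self {M : Matrix α α R} {q : ℕ} {K : Finset α} (hK : #K = q) :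
    M.minor q K K = (M.submatrix (Subtype.val : K → α) Subtype.val).det := by
  rw [minor_of_card hK hK, ← det_submatrix_equiv_self (K.orderIsoOfFin hK).toEquiv]
  rfl

end Matrix

namespace DForm

variable {n : ℕ}

open Matrix

theorem shuffleSign_mul_self (A B : Finset (Fin n)) : shuffleSign A B * shuffleSign A B = 1 := by
  rw [shuffleSign, ← pow_add, Even.neg_one_pow ⟨_, rfl⟩]

theorem shuffleSign_singleton (i : Fin n) (B : Finset (Fin n)) :
    shuffleSign {i} B = (-1) ^ B.rank i := by
  rw [shuffleSign, Finset.rank, card_filter]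
  congr 1
  refine sum_congr rfl fun x _ => ?_
  simp [filter_singleton, apply_ite card]

theorem ofMatrix_singleton (h : Matrix (Fin n) (Fin n) ℝ) (i j : Fin n) :
    ofMatrix h {i} {j} = h i j := by
  simp [ofMatrix, singleton_inj, ite_and]

theorem ofMatrix_of_card_ne_one (h : Matrix (Fin n) (Fin n) ℝ) {A B : Finset (Fin n)}
    (hAB : #A ≠ 1 ∨ #B ≠ 1) : ofMatrix h A B = 0 := by
  refine sum_eq_zero fun i _ => sum_eq_zero fun j _ => if_neg ?_
  rintro ⟨rfl, rfl⟩
  simp at hAB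

theorem wedge_ofMatrix (h : Matrix (Fin n) (Fin n) ℝ) (ω : DForm n) (I J : Finset (Fin n)) :
    wedge (ofMatrix h) ω I J = ∑ i ∈ I, ∑ j ∈ J,
      (-1) ^ (I.rank i + J.rank j) * h i j * ω (I.erase i) (J.erase j) := by
  rw [wedge, sum_powerset_eq_sum_singleton]
  · refine sum_congr rfl fun i _ => ?_
    rw [sum_powerset_eq_sum_singleton]
    · refine sum_congr rfl fun j _ => ?_
      rw [ofMatrix_singleton, sdiff_singleton_eq_erase, sdiff_singleton_eq_erase,
        shuffleSign_singleton, shuffleSign_singleton, rank_erase_self,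
        rank_erase_self, pow_add]
    · intro B hB
      rw [ofMatrix_of_card_ne_one h (Or.inr hB), mul_zero, zero_mul]
  · intro A hA
    exact sum_eq_zero fun B _ => by
      rw [ofMatrix_of_card_ne_one h (Or.inl hA), mul_zero, zero_mul]

theorem dpow_ofMatrix (h : Matrix (Fin n) (Fin n) ℝ) (q : ℕ) (I J : Finset (Fin n)) :
    dpow (ofMatrix h) q I J = (q.factorial : ℝ) * h.minor q I J := by
  induction q generalizing I J with
  | zero =>
    simp only [dpow, ← card_eq_zero, minor, det_isEmpty]
    split_ifs <;> simp
  | succ q ih =>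
    rw [dpow, wedge_ofMatrix]
    by_cases hIJ : #I = q + 1 ∧ #J = q + 1
    · have laplace (i : Fin n) (hi : i ∈ I) : ∑ j ∈ J, (-1) ^ (I.rank i + J.rank j) * h i j *
          dpow (ofMatrix h) q (I.erase i) (J.erase j) = q.factorial * h.minor (q + 1) I J := by
        rw [minor_succ_eq_sum h hIJ.1 hIJ.2 hi, mul_sum]
        exact sum_congr rfl fun j _ => by rw [ih]; ring
      rw [sum_congr rfl laplace, sum_const, hIJ.1, nsmul_eq_mul, Nat.factorial_succ]
      push_cast
      ring
    · rw [minor_of_not_card hIJ, mul_zero]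
      refine sum_eq_zero fun i hi => sum_eq_zero fun j hj => ?_
      have := card_pos.2 ⟨i, hi⟩
      have := card_pos.2 ⟨j, hj⟩
      have hcard : ¬(#(I.erase i) = q ∧ #(J.erase j) = q) := by
        rw [card_erase_of_mem hi, card_erase_of_mem hj]
        omega
      rw [ih, minor_of_not_card hcard, mul_zero, mul_zero]

theorem gMetric_eq_ofMatrix_one : gMetric n = ofMatrix 1 := by
  funext A B
  by_cases hAB : #A = 1 ∧ #B = 1
  · obtain ⟨⟨a, rfl⟩, ⟨b, rfl⟩⟩ := And.imp card_eq_one.1 card_eq_one.1 hAB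
    simp [gMetric, ofMatrix_singleton, one_apply]
  · rw [ofMatrix_of_card_ne_one 1 (not_and_or.1 hAB), gMetric, if_neg]
    rintro ⟨rfl, h⟩
    exact hAB ⟨h, h⟩

theorem dpow_gMetric (m : ℕ) (A B : Finset (Fin n)) :
    dpow (gMetric n) m A B = if A = B ∧ #A = m then (m.factorial : ℝ) else 0 := by
  rw [gMetric_eq_ofMatrix_one, dpow_ofMatrix, minor_one, mul_ite, mul_one, mul_zero]

theorem wedge_dpow_gMetric_self (m : ℕ) (ω : DForm n) (T : Finset (Fin n)) :
    wedge (dpow (gMetric n) m) ω T T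
      = m.factorial * ∑ A ∈ T.powersetCard m, ω (T \ A) (T \ A) := by
  rw [wedge, powersetCard_eq_filter, sum_filter, mul_sum]
  refine sum_congr rfl fun A hA => ?_
  simp_rw [dpow_gMetric, ite_and, mul_ite, ite_mul, mul_zero, zero_mul, sum_ite_eq, if_pos hA,
    shuffleSign_mul_self, one_mul]

theorem sInv_eq_sum_det_submatrix (h : Matrix (Fin n) (Fin n) ℝ) {k : ℕ} (hk : k ≤ n) :
    sInv h k = ∑ K ∈ univ.powersetCard k,
      (h.submatrix (Subtype.val : K → Fin n) Subtype.val).det := by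
  have minors := h.charpoly_coeff_eq_sum_minors k (by rwa [Fintype.card_fin])
  rw [Fintype.card_fin] at minors
  rw [sInv, minors, ← mul_assoc, ← pow_add, Even.neg_one_pow ⟨k, rfl⟩, one_mul]

theorem toScalar_contr (ω : DForm n) : toScalar (contr ω) = ∑ j, ω {j} {j} := by
  simp [toScalar, contr, shuffleSign]

theorem hstar_apply_self (ω : DForm n) (I : Finset (Fin n)) : hstar ω I I = ω Iᶜ Iᶜ := by
  rw [hstar, shuffleSign_mul_self, one_mul]

theorem tInv_apply_singleton_self (h : Matrix (Fin n) (Fin n) ℝ) {k : ℕ} (hk : k ≤ n - 1)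
    (j : Fin n) :
    tInv h k {j} {j}
      = ∑ K ∈ ({j}ᶜ : Finset (Fin n)).powersetCard k,
          (h.submatrix (Subtype.val : K → Fin n) Subtype.val).det := by
  have hT : #({j}ᶜ : Finset (Fin n)) = (n - 1 - k) + k := by
    rw [card_compl, card_singleton, Fintype.card_fin]; omega
  rw [tInv, Pi.smul_apply, Pi.smul_apply, smul_eq_mul, hstar_apply_self, wedge_dpow_gMetric_self,
    sum_powersetCard_sdiff hT fun K => dpow (ofMatrix h) k K K, mul_sum, mul_sum]
  refine sum_congr rfl fun K hK => ?_
  rw [dpow_ofMatrix, minor_self (mem_powersetCard.1 hK).2]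
  field_simp
  push_cast
  ring

end DForm

open DForm in
theorem statement7_general (n : ℕ) (h : Matrix (Fin n) (Fin n) ℝ)
    (k : ℕ) (hk : k ≤ n - 1) :
    toScalar (contr (tInv h k)) = ((n - k : ℕ) : ℝ) * sInv h k := by
  rw [toScalar_contr, sum_congr rfl fun j _ => tInv_apply_singleton_self h hk j,
    sum_sum_powersetCard_compl_singleton, Fintype.card_fin, nsmul_eq_mul,
    sInv_eq_sum_det_submatrix h (by omega)]

open DForm in
/-- Girard–Newton identity: `c t_k(h) = (n-k) s_k(h)`. -/
theorem statement7 (n : ℕ) (hn : 1 ≤ n) (h : Matrix (Fin n) (Fin n) ℝ)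
    (k : ℕ) (hk : k ≤ n - 1) :
    toScalar (contr (tInv h k)) = ((n - k : ℕ) : ℝ) * sInv h k :=
  statement7_general n h k hk
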